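/- Let Q be a real symmetric n×n matrix (n ≥ 2) that is negative semidefinite and whose kernel is exactly the span of a single vector z all of whose coordinates are strictly positive. Then for every nonempty proper subset S of {1,…,n}, the principal submatrix Q_S (rows and columns indexed by S) is negative definite. -/
import Mathlib


open scoped Matrix

lemma aux_symm_dot (n : ℕ) (Q : Matrix (Fin n) (Fin n) ℝ) (hsym : Q.IsSymm)
    (v w : Fin n → ℝ) : v ⬝ᵥ Q.mulVec w = w ⬝ᵥ Q.mulVec v := by
  rw [Matrix.dotProduct_mulVec, ← Matrix.mulVec_transpose, hsym.eq, dotProduct_comm]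

lemma aux_null (n : ℕ) (Q : Matrix (Fin n) (Fin n) ℝ) (hsym : Q.IsSymm)
    (hneg : ∀ v : Fin n → ℝ, v ⬝ᵥ Q.mulVec v ≤ 0)
    (v : Fin n → ℝ) (hv : v ⬝ᵥ Q.mulVec v = 0) : Q.mulVec v = 0 := by
  have hdot : ∀ w : Fin n → ℝ, w ⬝ᵥ Q.mulVec v = 0 := by
    intro w
    set a := w ⬝ᵥ Q.mulVec v with ha
    set b := w ⬝ᵥ Q.mulVec w with hb
    have hb0 : b ≤ 0 := hneg w
    have hexp : ∀ t : ℝ, 2 * t * a + t ^ 2 * b ≤ 0 := by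
      intro t
      have h := hneg (v + t • w)
      have hsw : v ⬝ᵥ Q.mulVec w = a := aux_symm_dot n Q hsym v w
      simp only [Matrix.mulVec_add, Matrix.mulVec_smul, dotProduct_add,
        add_dotProduct, dotProduct_smul, smul_dotProduct,
        smul_eq_mul, hv, hsw, ← ha, ← hb] at h
      nlinarith [h]
    have hc : (0:ℝ) < 1 - b := by linarith
    have h1 := hexp (a / (1 - b))
    have h2 : a ^ 2 * (2 - b) ≤ 0 := by
      have hc2 : (0:ℝ) < (1 - b) ^ 2 := pow_pos hc 2
      have heq2 : 2 * (a / (1 - b)) * a + (a / (1 - b)) ^ 2 * b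
          = a ^ 2 * (2 - b) / (1 - b) ^ 2 := by
        field_simp
        ring
      rw [heq2] at h1
      rcases div_nonpos_iff.mp h1 with ⟨h3, h4⟩ | ⟨h3, h4⟩
      · linarith
      · exact h3
    nlinarith [sq_nonneg a, h2]
  funext i
  have := hdot (Pi.single i 1)
  simpa [single_dotProduct] using this

/-- Zariski-type negativity lemma: if `Q` is a real symmetric negative semidefinite
`n × n` matrix (`n ≥ 2`) whose kernel is exactly the span of a vector `z` with all
coordinates strictly positive, then `Q` is negative definite on the span of any
nonempty proper subset of the standard coordinates, i.e. every proper principal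
submatrix is negative definite. -/
theorem stmt_4 (n : ℕ) (hn : 2 ≤ n) (Q : Matrix (Fin n) (Fin n) ℝ)
    (hsym : Q.IsSymm)
    (hneg : ∀ v : Fin n → ℝ, v ⬝ᵥ Q.mulVec v ≤ 0)
    (z : Fin n → ℝ) (hz : ∀ i, 0 < z i)
    (hker : ∀ v : Fin n → ℝ, Q.mulVec v = 0 ↔ ∃ t : ℝ, v = t • z)
    (S : Set (Fin n)) (hS : S.Nonempty) (hSproper : S ≠ Set.univ) :
    ∀ v : Fin n → ℝ, (∀ i, i ∉ S → v i = 0) → v ≠ 0 → v ⬝ᵥ Q.mulVec v < 0 := by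
  intro v hvS hv0
  refine lt_of_le_of_ne (hneg v) ?_
  intro heq
  have hQv : Q.mulVec v = 0 := aux_null n Q hsym hneg v heq
  obtain ⟨t, ht⟩ := (hker v).mp hQv
  obtain ⟨i, hi⟩ : ∃ i, i ∉ S := by
    by_contra h
    push_neg at h
    exact hSproper (Set.eq_univ_of_forall h)
  have hvi : v i = 0 := hvS i hi
  have hti : t * z i = 0 := by rw [ht] at hvi; simpa using hvi
  have ht0 : t = 0 := by
    rcases mul_eq_zero.mp hti with h | h
    · exact h
    · exact absurd h (ne_of_gt (hz i))
  apply hv0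
  rw [ht, ht0, zero_smul]
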